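/- In the linear factor model with λ^P the T₀×F matrix of pre-treatment factors (assumed full column rank), the post-treatment gap satisfies the identity: θ_t(Z₁ − Z₀w) + λ_t(μ₁ − μ₀w) = λ_t(λ^{P'}λ^P)^{-1}λ^{P'}(Y₁^P − Y₀^P w) + (θ_t − λ_t(λ^{P'}λ^P)^{-1}λ^{P'}θ^P)(Z₁ − Z₀w) − λ_t(λ^{P'}λ^P)^{-1}λ^{P'}(ε₁^P − ε₀^P w), where Y_i^P = δ^P + θ^P Z_i + λ^P μ_i + ε_i^P. -/

import Mathlib

/-!
Averaging the donors' pre-treatment outcomes with weights summing to one reproduces the linear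
factor model with averaged characteristics, so the common shock `δᴾ` cancels from the gap
`Y₁ᴾ - Y₀ᴾ w = θᴾ (Z₁ - Z₀ w) + λᴾ (μ₁ - μ₀ w) + (ε₁ᴾ - ε₀ᴾ w)`.
Applying the least-squares map `(λᴾ'λᴾ)⁻¹λᴾ'`, a left inverse of `λᴾ`, recovers `μ₁ - μ₀ w`
up to the `θᴾ` and noise terms; substituting it into `λ_t (μ₁ - μ₀ w)` gives the decomposition.
-/

open Finset Matrix

namespace Matrix

variable {R T k F J : Type*}

theorem mulVec_eq_of_col_eq_affine [Semiring R] [Fintype k] [Fintype F] [Fintype J]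
    (δ : T → R) (θ : Matrix T k R) (Λ : Matrix T F R)
    (Z : Matrix k J R) (μ : Matrix F J R) (ε Y : Matrix T J R)
    (hY : ∀ j, (fun s => Y s j)
      = δ + θ *ᵥ (fun i => Z i j) + Λ *ᵥ (fun f => μ f j) + (fun s => ε s j))
    {w : J → R} (hw : ∑ j, w j = 1) :
    Y *ᵥ w = δ + θ *ᵥ (Z *ᵥ w) + Λ *ᵥ (μ *ᵥ w) + ε *ᵥ w := by
  have hY' : Y = of (fun s _ => δ s) + θ * Z + Λ * μ + ε := by
    ext s j
    simpa [mulVec, dotProduct, mul_apply] using congrFun (hY j) s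
  have hδ : of (fun s (_ : J) => δ s) *ᵥ w = δ := by
    ext s
    simp [mulVec, dotProduct, ← mul_sum, hw]
  rw [hY', add_mulVec, add_mulVec, add_mulVec, hδ, ← mulVec_mulVec, ← mulVec_mulVec]

variable [CommRing R] [Fintype T] [Fintype F] [DecidableEq F]

noncomputable def olsMap (A : Matrix T F R) : Matrix F T R := (Aᵀ * A)⁻¹ * Aᵀ

theorem olsMap_mul_self (A : Matrix T F R) (h : IsUnit (Aᵀ * A).det) : olsMap A * A = 1 := by
  rw [olsMap, Matrix.mul_assoc, nonsing_inv_mul _ h]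

end Matrix

/-- The Abadie–Diamond–Hainmueller regression decomposition of the
post-treatment gap in the linear factor model. -/
theorem ADH_regression_decomposition
    (T₀ F k J : ℕ)
    (lamP : Matrix (Fin T₀) (Fin F) ℝ) (hrank : IsUnit (lamP.transpose * lamP).det)
    (θP : Matrix (Fin T₀) (Fin k) ℝ) (δP : Fin T₀ → ℝ)
    (Z₁ : Fin k → ℝ) (Z₀ : Matrix (Fin k) (Fin J) ℝ)
    (μ₁ : Fin F → ℝ) (μ₀ : Matrix (Fin F) (Fin J) ℝ)
    (ε₁ : Fin T₀ → ℝ) (ε₀ : Matrix (Fin T₀) (Fin J) ℝ)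
    (Y₁P : Fin T₀ → ℝ) (Y₀P : Matrix (Fin T₀) (Fin J) ℝ)
    (hY₁ : Y₁P = δP + θP *ᵥ Z₁ + lamP *ᵥ μ₁ + ε₁)
    (hY₀ : ∀ j, (fun s => Y₀P s j)
      = δP + θP *ᵥ (fun i => Z₀ i j) + lamP *ᵥ (fun f => μ₀ f j) + (fun s => ε₀ s j))
    (θt : Fin k → ℝ) (lamt : Fin F → ℝ)
    (w : Fin J → ℝ) (hw : w ∈ stdSimplex ℝ (Fin J))
    (P : (Fin T₀ → ℝ) → ℝ)
    (hP : ∀ u, P u = lamt ⬝ᵥ ((lamP.transpose * lamP)⁻¹ *ᵥ (lamP.transpose *ᵥ u))) :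
    θt ⬝ᵥ (Z₁ - Z₀ *ᵥ w) + lamt ⬝ᵥ (μ₁ - μ₀ *ᵥ w)
      = P (Y₁P - Y₀P *ᵥ w)
        + (fun i => θt i - P (fun s => θP s i)) ⬝ᵥ (Z₁ - Z₀ *ᵥ w)
        - P (ε₁ - ε₀ *ᵥ w) := by
  have hPℓ : ∀ u, P u = (lamt ᵥ* olsMap lamP) ⬝ᵥ u := fun u => by
    rw [hP, olsMap, mulVec_mulVec, dotProduct_mulVec]
  set ℓ := lamt ᵥ* olsMap lamP
  have hℓlam : ℓ ᵥ* lamP = lamt := by rw [vecMul_vecMul, olsMap_mul_self lamP hrank, vecMul_one]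
  have hgap : Y₁P - Y₀P *ᵥ w
      = θP *ᵥ (Z₁ - Z₀ *ᵥ w) + lamP *ᵥ (μ₁ - μ₀ *ᵥ w) + (ε₁ - ε₀ *ᵥ w) := by
    rw [hY₁, mulVec_eq_of_col_eq_affine δP θP lamP Z₀ μ₀ ε₀ Y₀P hY₀ hw.2,
      mulVec_sub, mulVec_sub]
    abel
  have hθ : (fun i => θt i - P (fun s => θP s i)) = θt - ℓ ᵥ* θP := by
    ext i
    simp only [hPℓ, Pi.sub_apply, vecMul]
  rw [hPℓ, hPℓ, hgap, hθ, dotProduct_add, dotProduct_add, dotProduct_mulVec, dotProduct_mulVec,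
    hℓlam, sub_dotProduct]
  ring
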